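/- arXiv:math/0309415 — 6 statements merged into one kernel-verified Lean document; each statement's English description precedes it below -/
import Mathlib

section
/- Let γ ∈ GL(3,ℂ) with rows (a₁,a₂,a₃),(b₁,b₂,b₃),(c₁,c₂,c₃), and on the open set of points (z₁,z₂) ∈ ℂ² with c₁z₁+c₂z₂+c₃ ≠ 0 define the holomorphic functions w₁(z₁,z₂) := (a₁z₁+a₂z₂+a₃)/(c₁z₁+c₂z₂+c₃) and w₂(z₁,z₂) := (b₁z₁+b₂z₂+b₃)/(c₁z₁+c₂z₂+c₃). Then J(w₁,w₂) = det(γ)·(c₁z₁+c₂z₂+c₃)⁻³ ≠ 0 and all four GL(3) derivatives of the pair (w₁,w₂) with respect to (z₁,z₂) vanish identically: {w₁,w₂;z₁,z₂}_{z₁} = 0, {w₁,w₂;z₁,z₂}_{z₂} = 0, [w₁,w₂;z₁,z₂]_{z₁} = 0, [w₁,w₂;z₁,z₂]_{z₂} = 0. -/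
open Complex Matrix

noncomputable section

/-- Partial derivative in the first complex variable. -/
def pdx (f : ℂ × ℂ → ℂ) (p : ℂ × ℂ) : ℂ := deriv (fun x => f (x, p.2)) p.1

/-- Partial derivative in the second complex variable. -/
def pdy (f : ℂ × ℂ → ℂ) (p : ℂ × ℂ) : ℂ := deriv (fun y => f (p.1, y)) p.2

/-- The Jacobian `J(u₁,u₂) = ∂ₓu₁·∂ᵧu₂ − ∂ₓu₂·∂ᵧu₁`. -/
def Jac (u₁ u₂ : ℂ × ℂ → ℂ) (p : ℂ × ℂ) : ℂ :=
  pdx u₁ p * pdy u₂ p - pdx u₂ p * pdy u₁ p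

/-- The GL(3) derivative `{u₁,u₂;x,y}ₓ`. -/
def brX (u₁ u₂ : ℂ × ℂ → ℂ) (p : ℂ × ℂ) : ℂ :=
  (pdx u₁ p * pdx (pdx u₂) p - pdx u₂ p * pdx (pdx u₁) p) / Jac u₁ u₂ p

/-- The GL(3) derivative `{u₁,u₂;x,y}ᵧ`. -/
def brY (u₁ u₂ : ℂ × ℂ → ℂ) (p : ℂ × ℂ) : ℂ :=
  -(pdy u₁ p * pdy (pdy u₂) p - pdy u₂ p * pdy (pdy u₁) p) / Jac u₁ u₂ p

/-- The GL(3) derivative `[u₁,u₂;x,y]ₓ`. -/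
def sqX (u₁ u₂ : ℂ × ℂ → ℂ) (p : ℂ × ℂ) : ℂ :=
  ((pdy u₁ p * pdx (pdx u₂) p - pdy u₂ p * pdx (pdx u₁) p)
      + 2 * (pdx u₁ p * pdx (pdy u₂) p - pdx u₂ p * pdx (pdy u₁) p)) / Jac u₁ u₂ p

/-- The GL(3) derivative `[u₁,u₂;x,y]ᵧ`. -/
def sqY (u₁ u₂ : ℂ × ℂ → ℂ) (p : ℂ × ℂ) : ℂ :=
  -((pdx u₁ p * pdy (pdy u₂) p - pdx u₂ p * pdy (pdy u₁) p)
      + 2 * (pdy u₁ p * pdx (pdy u₂) p - pdy u₂ p * pdx (pdy u₁) p)) / Jac u₁ u₂ p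

/-!
Each component `w = N / L` of a projective transformation, with `N = α·z + α₃` and
`L = c·z + c₃` affine, satisfies `L · ∂ᵢw = αᵢ - cᵢ w`. Differentiating once more gives
`∂ᵢ∂ⱼw = -(κᵢ ∂ⱼw + κⱼ ∂ᵢw)` with `κ = c / L`, the same `κ` for both components. Substituted into
the four GL(3) derivatives, these second-order relations turn each numerator into an antisymmetric
expression in `(w₁, w₂)`, which vanishes. The Jacobian formula is the polynomial identity
`(a₁L - c₁A)(b₂L - c₂B) - (b₁L - c₁B)(a₂L - c₂A) = det γ · L` for `A = a·z + a₃`, `B = b·z + b₃`.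
-/

open Filter Topology

def affine (α₁ α₂ α₃ : ℂ) (p : ℂ × ℂ) : ℂ := α₁ * p.1 + α₂ * p.2 + α₃

def affineRatio (α₁ α₂ α₃ c₁ c₂ c₃ : ℂ) (p : ℂ × ℂ) : ℂ := affine α₁ α₂ α₃ p / affine c₁ c₂ c₃ p

lemma continuous_affine (α₁ α₂ α₃ : ℂ) : Continuous (affine α₁ α₂ α₃) := by
  unfold affine
  fun_prop

lemma affine_swap (α₁ α₂ α₃ : ℂ) (p : ℂ × ℂ) : affine α₁ α₂ α₃ p.swap = affine α₂ α₁ α₃ p := by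
  simp only [affine, Prod.fst_swap, Prod.snd_swap]
  ring

lemma affineRatio_swap (α₁ α₂ α₃ c₁ c₂ c₃ : ℂ) (p : ℂ × ℂ) :
    affineRatio α₁ α₂ α₃ c₁ c₂ c₃ p.swap = affineRatio α₂ α₁ α₃ c₂ c₁ c₃ p := by
  simp only [affineRatio, affine_swap]

lemma affineRatio_comp_swap (α₁ α₂ α₃ c₁ c₂ c₃ : ℂ) :
    affineRatio α₁ α₂ α₃ c₁ c₂ c₃ ∘ Prod.swap = affineRatio α₂ α₁ α₃ c₂ c₁ c₃ :=
  funext (affineRatio_swap α₁ α₂ α₃ c₁ c₂ c₃)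

lemma hasDerivAt_affine_fst (α₁ α₂ α₃ : ℂ) (p : ℂ × ℂ) :
    HasDerivAt (fun s => affine α₁ α₂ α₃ (s, p.2)) α₁ p.1 := by
  simpa [affine] using (((hasDerivAt_id p.1).const_mul α₁).add_const (α₂ * p.2)).add_const α₃

lemma pdy_eq_pdx_comp_swap (f : ℂ × ℂ → ℂ) (p : ℂ × ℂ) :
    pdy f p = pdx (f ∘ Prod.swap) p.swap :=
  rfl

lemma pdy_pdy_eq_pdx_pdx_comp_swap (f : ℂ × ℂ → ℂ) (p : ℂ × ℂ) :
    pdy (pdy f) p = pdx (pdx (f ∘ Prod.swap)) p.swap :=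
  rfl

lemma pdx_congr_of_eventuallyEq {f g : ℂ × ℂ → ℂ} {p : ℂ × ℂ} (h : f =ᶠ[𝓝 p] g) :
    pdx f p = pdx g p := by
  have hline : Tendsto (fun s : ℂ => (s, p.2)) (𝓝 p.1) (𝓝 p) :=
    (continuous_id.prodMk continuous_const).tendsto' p.1 p rfl
  exact (h.comp_tendsto hline).deriv_eq

structure HasProjectiveHessianAt (κ₁ κ₂ : ℂ) (u : ℂ × ℂ → ℂ) (p : ℂ × ℂ) : Prop where
  pdx_pdx : pdx (pdx u) p = -(2 * κ₁ * pdx u p)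
  pdy_pdy : pdy (pdy u) p = -(2 * κ₂ * pdy u p)
  pdx_pdy : pdx (pdy u) p = -(κ₁ * pdy u p + κ₂ * pdx u p)

namespace HasProjectiveHessianAt

variable {κ₁ κ₂ : ℂ} {u₁ u₂ : ℂ × ℂ → ℂ} {p : ℂ × ℂ}

lemma brX_eq_zero (h₁ : HasProjectiveHessianAt κ₁ κ₂ u₁ p)
    (h₂ : HasProjectiveHessianAt κ₁ κ₂ u₂ p) : brX u₁ u₂ p = 0 := by
  rw [brX, h₁.pdx_pdx, h₂.pdx_pdx]
  ring

lemma brY_eq_zero (h₁ : HasProjectiveHessianAt κ₁ κ₂ u₁ p)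
    (h₂ : HasProjectiveHessianAt κ₁ κ₂ u₂ p) : brY u₁ u₂ p = 0 := by
  rw [brY, h₁.pdy_pdy, h₂.pdy_pdy]
  ring

lemma sqX_eq_zero (h₁ : HasProjectiveHessianAt κ₁ κ₂ u₁ p)
    (h₂ : HasProjectiveHessianAt κ₁ κ₂ u₂ p) : sqX u₁ u₂ p = 0 := by
  rw [sqX, h₁.pdx_pdx, h₂.pdx_pdx, h₁.pdx_pdy, h₂.pdx_pdy]
  ring

lemma sqY_eq_zero (h₁ : HasProjectiveHessianAt κ₁ κ₂ u₁ p)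
    (h₂ : HasProjectiveHessianAt κ₁ κ₂ u₂ p) : sqY u₁ u₂ p = 0 := by
  rw [sqY, h₁.pdy_pdy, h₂.pdy_pdy, h₁.pdx_pdy, h₂.pdx_pdy]
  ring

end HasProjectiveHessianAt

section AffineRatio

variable {α₁ α₂ α₃ c₁ c₂ c₃ : ℂ} {p : ℂ × ℂ}

lemma hasDerivAt_affineRatio_fst (hp : affine c₁ c₂ c₃ p ≠ 0) :
    HasDerivAt (fun s => affineRatio α₁ α₂ α₃ c₁ c₂ c₃ (s, p.2))
      ((α₁ - c₁ * affineRatio α₁ α₂ α₃ c₁ c₂ c₃ p) / affine c₁ c₂ c₃ p) p.1 := by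
  refine ((hasDerivAt_affine_fst α₁ α₂ α₃ p).fun_div
    (hasDerivAt_affine_fst c₁ c₂ c₃ p) hp).congr_deriv ?_
  rw [affineRatio]
  field_simp

lemma pdx_affineRatio (hp : affine c₁ c₂ c₃ p ≠ 0) :
    pdx (affineRatio α₁ α₂ α₃ c₁ c₂ c₃) p
      = (α₁ - c₁ * affineRatio α₁ α₂ α₃ c₁ c₂ c₃ p) / affine c₁ c₂ c₃ p :=
  (hasDerivAt_affineRatio_fst hp).deriv

lemma pdy_affineRatio (hp : affine c₁ c₂ c₃ p ≠ 0) :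
    pdy (affineRatio α₁ α₂ α₃ c₁ c₂ c₃) p
      = (α₂ - c₂ * affineRatio α₁ α₂ α₃ c₁ c₂ c₃ p) / affine c₁ c₂ c₃ p := by
  rw [pdy_eq_pdx_comp_swap, affineRatio_comp_swap, pdx_affineRatio (by rwa [affine_swap]),
    affine_swap, affineRatio_swap]

lemma pdx_affineRatio_eventuallyEq (hp : affine c₁ c₂ c₃ p ≠ 0) :
    pdx (affineRatio α₁ α₂ α₃ c₁ c₂ c₃) =ᶠ[𝓝 p]
      fun q => (α₁ - c₁ * affineRatio α₁ α₂ α₃ c₁ c₂ c₃ q) / affine c₁ c₂ c₃ q :=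
  ((continuous_affine c₁ c₂ c₃).continuousAt.eventually_ne hp).mono fun _ => pdx_affineRatio

lemma pdy_affineRatio_eventuallyEq (hp : affine c₁ c₂ c₃ p ≠ 0) :
    pdy (affineRatio α₁ α₂ α₃ c₁ c₂ c₃) =ᶠ[𝓝 p]
      fun q => (α₂ - c₂ * affineRatio α₁ α₂ α₃ c₁ c₂ c₃ q) / affine c₁ c₂ c₃ q :=
  ((continuous_affine c₁ c₂ c₃).continuousAt.eventually_ne hp).mono fun _ => pdy_affineRatio

lemma pdx_sub_mul_affineRatio_div (β γ : ℂ) (hp : affine c₁ c₂ c₃ p ≠ 0) :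
    pdx (fun q => (β - γ * affineRatio α₁ α₂ α₃ c₁ c₂ c₃ q) / affine c₁ c₂ c₃ q) p
      = -(γ * pdx (affineRatio α₁ α₂ α₃ c₁ c₂ c₃) p
          + c₁ * ((β - γ * affineRatio α₁ α₂ α₃ c₁ c₂ c₃ p) / affine c₁ c₂ c₃ p))
        / affine c₁ c₂ c₃ p := by
  have h := (((hasDerivAt_affineRatio_fst (α₁ := α₁) (α₂ := α₂) (α₃ := α₃) hp).const_mul
    γ).const_sub β).fun_div (hasDerivAt_affine_fst c₁ c₂ c₃ p) hp
  rw [pdx, h.deriv, pdx_affineRatio hp]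
  field_simp
  ring

lemma pdx_pdx_affineRatio (hp : affine c₁ c₂ c₃ p ≠ 0) :
    pdx (pdx (affineRatio α₁ α₂ α₃ c₁ c₂ c₃)) p
      = -(2 * (c₁ / affine c₁ c₂ c₃ p) * pdx (affineRatio α₁ α₂ α₃ c₁ c₂ c₃) p) := by
  rw [pdx_congr_of_eventuallyEq (pdx_affineRatio_eventuallyEq hp),
    pdx_sub_mul_affineRatio_div _ _ hp, ← pdx_affineRatio hp]
  ring

lemma pdx_pdy_affineRatio (hp : affine c₁ c₂ c₃ p ≠ 0) :
    pdx (pdy (affineRatio α₁ α₂ α₃ c₁ c₂ c₃)) p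
      = -(c₁ / affine c₁ c₂ c₃ p * pdy (affineRatio α₁ α₂ α₃ c₁ c₂ c₃) p
          + c₂ / affine c₁ c₂ c₃ p * pdx (affineRatio α₁ α₂ α₃ c₁ c₂ c₃) p) := by
  rw [pdx_congr_of_eventuallyEq (pdy_affineRatio_eventuallyEq hp),
    pdx_sub_mul_affineRatio_div _ _ hp, ← pdy_affineRatio hp]
  ring

lemma pdy_pdy_affineRatio (hp : affine c₁ c₂ c₃ p ≠ 0) :
    pdy (pdy (affineRatio α₁ α₂ α₃ c₁ c₂ c₃)) p
      = -(2 * (c₂ / affine c₁ c₂ c₃ p) * pdy (affineRatio α₁ α₂ α₃ c₁ c₂ c₃) p) := by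
  rw [pdy_pdy_eq_pdx_pdx_comp_swap, pdy_eq_pdx_comp_swap, affineRatio_comp_swap,
    pdx_pdx_affineRatio (by rwa [affine_swap]), affine_swap]

lemma hasProjectiveHessianAt_affineRatio (α₁ α₂ α₃ : ℂ) (hp : affine c₁ c₂ c₃ p ≠ 0) :
    HasProjectiveHessianAt (c₁ / affine c₁ c₂ c₃ p) (c₂ / affine c₁ c₂ c₃ p)
      (affineRatio α₁ α₂ α₃ c₁ c₂ c₃) p :=
  ⟨pdx_pdx_affineRatio hp, pdy_pdy_affineRatio hp, pdx_pdy_affineRatio hp⟩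

lemma jac_affineRatio (a₁ a₂ a₃ b₁ b₂ b₃ : ℂ) (hp : affine c₁ c₂ c₃ p ≠ 0) :
    Jac (affineRatio a₁ a₂ a₃ c₁ c₂ c₃) (affineRatio b₁ b₂ b₃ c₁ c₂ c₃) p
      = (a₁ * (b₂ * c₃ - b₃ * c₂) - a₂ * (b₁ * c₃ - b₃ * c₁) + a₃ * (b₁ * c₂ - b₂ * c₁))
        * (affine c₁ c₂ c₃ p)⁻¹ ^ 3 := by
  rw [Jac, pdx_affineRatio hp, pdy_affineRatio hp, pdx_affineRatio hp, pdy_affineRatio hp,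
    affineRatio, affineRatio]
  field_simp
  unfold affine
  ring

end AffineRatio

/-- The four GL(3) derivatives of a linear fractional pair
`(w₁,w₂) = γ(z₁,z₂)` with respect to `(z₁,z₂)` vanish, and its Jacobian equals
`det(γ)·(c₁z₁+c₂z₂+c₃)⁻³ ≠ 0`. -/
theorem statement1 (a₁ a₂ a₃ b₁ b₂ b₃ c₁ c₂ c₃ : ℂ)
    (hdet : a₁ * (b₂ * c₃ - b₃ * c₂) - a₂ * (b₁ * c₃ - b₃ * c₁)
        + a₃ * (b₁ * c₂ - b₂ * c₁) ≠ 0)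
    (w₁ w₂ : ℂ × ℂ → ℂ)
    (hw₁ : w₁ = fun p => (a₁ * p.1 + a₂ * p.2 + a₃) / (c₁ * p.1 + c₂ * p.2 + c₃))
    (hw₂ : w₂ = fun p => (b₁ * p.1 + b₂ * p.2 + b₃) / (c₁ * p.1 + c₂ * p.2 + c₃)) :
    ∀ p : ℂ × ℂ, c₁ * p.1 + c₂ * p.2 + c₃ ≠ 0 →
      Jac w₁ w₂ p =
        (a₁ * (b₂ * c₃ - b₃ * c₂) - a₂ * (b₁ * c₃ - b₃ * c₁)
          + a₃ * (b₁ * c₂ - b₂ * c₁)) * ((c₁ * p.1 + c₂ * p.2 + c₃)⁻¹) ^ 3 ∧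
      Jac w₁ w₂ p ≠ 0 ∧
      brX w₁ w₂ p = 0 ∧
      brY w₁ w₂ p = 0 ∧
      sqX w₁ w₂ p = 0 ∧
      sqY w₁ w₂ p = 0 := by
  subst hw₁ hw₂
  intro p hp
  have hJ := jac_affineRatio a₁ a₂ a₃ b₁ b₂ b₃ hp
  have h₁ := hasProjectiveHessianAt_affineRatio a₁ a₂ a₃ hp
  have h₂ := hasProjectiveHessianAt_affineRatio b₁ b₂ b₃ hp
  have hJ_ne : Jac (affineRatio a₁ a₂ a₃ c₁ c₂ c₃) (affineRatio b₁ b₂ b₃ c₁ c₂ c₃) p ≠ 0 := by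
    rw [hJ]
    exact mul_ne_zero hdet (pow_ne_zero 3 (inv_ne_zero hp))
  exact ⟨hJ, hJ_ne, h₁.brX_eq_zero h₂, h₁.brY_eq_zero h₂, h₁.sqX_eq_zero h₂, h₁.sqY_eq_zero h₂⟩
end
end

section
/- (Multiplicativity of M.) Let Φ = (w₁,w₂) : Ω → Ω' and Ψ = (u₁,u₂) : Ω' → Ω'' be holomorphic maps between open subsets of ℂ². Then at every point p ∈ Ω, M(w₁,w₂;x,y)(p) · M(u₁,u₂;w₁,w₂)(Φ(p)) = M(ũ₁,ũ₂;x,y)(p), where (ũ₁,ũ₂) := Ψ ∘ Φ, M(u₁,u₂;w₁,w₂) is the matrix M formed from the partial derivatives of u₁,u₂ with respect to (w₁,w₂), and M(ũ₁,ũ₂;x,y) is formed from the partial derivatives of the composite with respect to (x,y). -/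
open Complex Matrix

noncomputable section

/-- The 4×4 matrix `M(w₁,w₂;x,y)` built from the first partial derivatives of
the holomorphic map `(w₁,w₂)`. -/
def Mmat (w₁ w₂ : ℂ × ℂ → ℂ) (p : ℂ × ℂ) : Matrix (Fin 4) (Fin 4) ℂ :=
  !![(pdx w₁ p) ^ 3, -(pdx w₂ p) ^ 3, (pdx w₁ p) ^ 2 * pdx w₂ p,
        -(pdx w₁ p) * (pdx w₂ p) ^ 2;
     -(pdy w₁ p) ^ 3, (pdy w₂ p) ^ 3, -(pdy w₁ p) ^ 2 * pdy w₂ p,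
        (pdy w₁ p) * (pdy w₂ p) ^ 2;
     3 * (pdx w₁ p) ^ 2 * pdy w₁ p, -3 * (pdx w₂ p) ^ 2 * pdy w₂ p,
        (pdx w₁ p) ^ 2 * pdy w₂ p + 2 * pdx w₁ p * pdx w₂ p * pdy w₁ p,
        -(pdx w₂ p) ^ 2 * pdy w₁ p - 2 * pdx w₁ p * pdx w₂ p * pdy w₂ p;
     -3 * pdx w₁ p * (pdy w₁ p) ^ 2, 3 * pdx w₂ p * (pdy w₂ p) ^ 2,
        -(pdx w₂ p) * (pdy w₁ p) ^ 2 - 2 * pdx w₁ p * pdy w₁ p * pdy w₂ p,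
        (pdx w₁ p) * (pdy w₂ p) ^ 2 + 2 * pdx w₂ p * pdy w₁ p * pdy w₂ p]

/-- The column vector of the four GL(3) derivatives of the pair `(u₁,u₂)`. -/
def Vvec (u₁ u₂ : ℂ × ℂ → ℂ) (p : ℂ × ℂ) : Fin 4 → ℂ :=
  ![brX u₁ u₂ p, brY u₁ u₂ p, sqX u₁ u₂ p, sqY u₁ u₂ p]

/-! `M(w₁,w₂;x,y)` is a cubic polynomial function `cubicRep` of the Jacobian matrix
`J = [[∂ₓw₁, ∂ₓw₂], [∂ᵧw₁, ∂ᵧw₂]]`, and `cubicRep` is multiplicative on all 2×2 matrices.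
With this orientation of `J` the chain rule reads `J_{Ψ∘Φ}(p) = J_Φ(p) * J_Ψ(Φ p)`, so the
product of the two `M`s is `cubicRep` of the composite's Jacobian matrix. -/

section CubicRep

variable {R : Type*} [CommRing R]

def cubicRep (J : Matrix (Fin 2) (Fin 2) R) : Matrix (Fin 4) (Fin 4) R :=
  let a := J 0 0; let b := J 0 1; let c := J 1 0; let d := J 1 1
  !![a ^ 3, -b ^ 3, a ^ 2 * b, -a * b ^ 2;
     -c ^ 3, d ^ 3, -c ^ 2 * d, c * d ^ 2;
     3 * a ^ 2 * c, -3 * b ^ 2 * d, a ^ 2 * d + 2 * a * b * c, -b ^ 2 * c - 2 * a * b * d;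
     -3 * a * c ^ 2, 3 * b * d ^ 2, -b * c ^ 2 - 2 * a * c * d, a * d ^ 2 + 2 * b * c * d]

theorem cubicRep_mul (J K : Matrix (Fin 2) (Fin 2) R) :
    cubicRep (J * K) = cubicRep J * cubicRep K := by
  ext i j
  fin_cases i <;> fin_cases j <;>
    · simp only [cubicRep, Matrix.mul_apply, Fin.sum_univ_two, Fin.sum_univ_four, of_apply,
        cons_val', cons_val, cons_val_zero, cons_val_one, cons_val_fin_one, Fin.zero_eta,
        Fin.mk_one, Fin.reduceFinMk, Fin.isValue]
      ring

end CubicRep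

def jacobianMatrix (w₁ w₂ : ℂ × ℂ → ℂ) (p : ℂ × ℂ) : Matrix (Fin 2) (Fin 2) ℂ :=
  !![pdx w₁ p, pdx w₂ p; pdy w₁ p, pdy w₂ p]

theorem Mmat_eq_cubicRep_jacobianMatrix (w₁ w₂ : ℂ × ℂ → ℂ) (p : ℂ × ℂ) :
    Mmat w₁ w₂ p = cubicRep (jacobianMatrix w₁ w₂ p) := rfl

section ChainRule

variable {u : ℂ × ℂ → ℂ} {p : ℂ × ℂ}

theorem DifferentiableAt.hasDerivAt_pdx (hu : DifferentiableAt ℂ u p) :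
    HasDerivAt (fun x => u (x, p.2)) (pdx u p) p.1 :=
  (hu.comp p.1 (differentiableAt_id.prodMk (differentiableAt_const p.2))).hasDerivAt

theorem DifferentiableAt.hasDerivAt_pdy (hu : DifferentiableAt ℂ u p) :
    HasDerivAt (fun y => u (p.1, y)) (pdy u p) p.2 :=
  (hu.comp p.2 ((differentiableAt_const p.1).prodMk differentiableAt_id)).hasDerivAt

theorem DifferentiableAt.pdx_eq_fderiv (hu : DifferentiableAt ℂ u p) :
    pdx u p = fderiv ℂ u p (1, 0) :=
  (hu.hasFDerivAt.comp_hasDerivAt p.1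
    ((hasDerivAt_id p.1).prodMk (hasDerivAt_const p.1 p.2))).deriv

theorem DifferentiableAt.pdy_eq_fderiv (hu : DifferentiableAt ℂ u p) :
    pdy u p = fderiv ℂ u p (0, 1) :=
  (hu.hasFDerivAt.comp_hasDerivAt p.2
    ((hasDerivAt_const p.2 p.1).prodMk (hasDerivAt_id p.2))).deriv

theorem DifferentiableAt.hasDerivAt_comp_prodMk {f g : ℂ → ℂ} {f' g' t : ℂ}
    (hu : DifferentiableAt ℂ u (f t, g t)) (hf : HasDerivAt f f' t) (hg : HasDerivAt g g' t) :
    HasDerivAt (fun s => u (f s, g s)) (f' * pdx u (f t, g t) + g' * pdy u (f t, g t)) t := by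
  have h := hu.hasFDerivAt.comp_hasDerivAt t (hf.prodMk hg)
  have hsplit : ((f', g') : ℂ × ℂ) = f' • ((1 : ℂ), (0 : ℂ)) + g' • ((0 : ℂ), (1 : ℂ)) := by
    simp
  rw [hsplit, map_add, map_smul, map_smul, ← hu.pdx_eq_fderiv, ← hu.pdy_eq_fderiv] at h
  simpa [Function.comp_def] using h

end ChainRule

theorem jacobianMatrix_comp {w₁ w₂ u₁ u₂ : ℂ × ℂ → ℂ} {p : ℂ × ℂ}
    (hw₁ : DifferentiableAt ℂ w₁ p) (hw₂ : DifferentiableAt ℂ w₂ p)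
    (hu₁ : DifferentiableAt ℂ u₁ (w₁ p, w₂ p)) (hu₂ : DifferentiableAt ℂ u₂ (w₁ p, w₂ p)) :
    jacobianMatrix (fun q => u₁ (w₁ q, w₂ q)) (fun q => u₂ (w₁ q, w₂ q)) p =
      jacobianMatrix w₁ w₂ p * jacobianMatrix u₁ u₂ (w₁ p, w₂ p) := by
  have pdx_comp {u} (hu : DifferentiableAt ℂ u (w₁ p, w₂ p)) :
      pdx (fun q => u (w₁ q, w₂ q)) p =
        pdx w₁ p * pdx u (w₁ p, w₂ p) + pdx w₂ p * pdy u (w₁ p, w₂ p) :=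
    (hu.hasDerivAt_comp_prodMk hw₁.hasDerivAt_pdx hw₂.hasDerivAt_pdx).deriv
  have pdy_comp {u} (hu : DifferentiableAt ℂ u (w₁ p, w₂ p)) :
      pdy (fun q => u (w₁ q, w₂ q)) p =
        pdy w₁ p * pdx u (w₁ p, w₂ p) + pdy w₂ p * pdy u (w₁ p, w₂ p) :=
    (hu.hasDerivAt_comp_prodMk hw₁.hasDerivAt_pdy hw₂.hasDerivAt_pdy).deriv
  ext i j
  fin_cases i <;> fin_cases j <;>
    simp [jacobianMatrix, Matrix.mul_apply, pdx_comp hu₁, pdx_comp hu₂, pdy_comp hu₁,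
      pdy_comp hu₂]

theorem statement5_general (Ω Ω' : Set (ℂ × ℂ))
    (hΩ : IsOpen Ω) (hΩ' : IsOpen Ω')
    (w₁ w₂ : ℂ × ℂ → ℂ)
    (hw₁ : DifferentiableOn ℂ w₁ Ω) (hw₂ : DifferentiableOn ℂ w₂ Ω)
    (hmaps : ∀ p ∈ Ω, (w₁ p, w₂ p) ∈ Ω')
    (u₁ u₂ : ℂ × ℂ → ℂ)
    (hu₁ : DifferentiableOn ℂ u₁ Ω') (hu₂ : DifferentiableOn ℂ u₂ Ω') :
    ∀ p ∈ Ω,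
      Mmat w₁ w₂ p * Mmat u₁ u₂ (w₁ p, w₂ p) =
        Mmat (fun q => u₁ (w₁ q, w₂ q)) (fun q => u₂ (w₁ q, w₂ q)) p := by
  intro p hp
  have hΦp : (w₁ p, w₂ p) ∈ Ω' := hmaps p hp
  simp only [Mmat_eq_cubicRep_jacobianMatrix]
  rw [jacobianMatrix_comp (hw₁.differentiableAt (hΩ.mem_nhds hp))
    (hw₂.differentiableAt (hΩ.mem_nhds hp)) (hu₁.differentiableAt (hΩ'.mem_nhds hΦp))
    (hu₂.differentiableAt (hΩ'.mem_nhds hΦp)), cubicRep_mul]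

/-- Multiplicativity of the matrix `M` under composition of
holomorphic maps: `M(Φ;x,y)·M(Ψ;w₁,w₂)∘Φ = M(Ψ∘Φ;x,y)`. -/
theorem statement5 (Ω Ω' Ω'' : Set (ℂ × ℂ))
    (hΩ : IsOpen Ω) (hΩ' : IsOpen Ω') (hΩ'' : IsOpen Ω'')
    (w₁ w₂ : ℂ × ℂ → ℂ)
    (hw₁ : DifferentiableOn ℂ w₁ Ω) (hw₂ : DifferentiableOn ℂ w₂ Ω)
    (hmaps : ∀ p ∈ Ω, (w₁ p, w₂ p) ∈ Ω')
    (u₁ u₂ : ℂ × ℂ → ℂ)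
    (hu₁ : DifferentiableOn ℂ u₁ Ω') (hu₂ : DifferentiableOn ℂ u₂ Ω')
    (hmaps' : ∀ q ∈ Ω', (u₁ q, u₂ q) ∈ Ω'') :
    ∀ p ∈ Ω,
      Mmat w₁ w₂ p * Mmat u₁ u₂ (w₁ p, w₂ p) =
        Mmat (fun q => u₁ (w₁ q, w₂ q)) (fun q => u₂ (w₁ q, w₂ q)) p :=
  statement5_general Ω Ω' hΩ hΩ' w₁ w₂ hw₁ hw₂ hmaps u₁ u₂ hu₁ hu₂
end
end

section
/- Let a₁,a₂,a₃,b₁,b₂,b₃,c₁,c₂,c₃ be holomorphic functions of (x,y) on an open set Ω ⊆ ℂ², and suppose z₁,z₂,z₃ : Ω → ℂ are holomorphic solutions of the system ∂ₓₓz = a₁∂ₓz + a₂∂ᵧz + a₃z, ∂ₓᵧz = b₁∂ₓz + b₂∂ᵧz + b₃z, ∂ᵧᵧz = c₁∂ₓz + c₂∂ᵧz + c₃z. Assume z₃ ≠ 0 on Ω and that u₁ := z₁/z₃, u₂ := z₂/z₃ satisfy J(u₁,u₂) ≠ 0 on Ω. Then on Ω: {u₁,u₂;x,y}ₓ = a₂,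 {u₁,u₂;x,y}ᵧ = c₁, [u₁,u₂;x,y]ₓ = 2b₂ − a₁, and [u₁,u₂;x,y]ᵧ = 2b₁ − c₂. -/
/-!
Writing `zᵢ = uᵢ z₃`, Leibniz's rule turns the systems satisfied by `zᵢ` and `z₃` into a
homogeneous system for each ratio `uᵢ`: the coefficients `a₂`, `c₁` are unchanged, while
`a₁, b₁, b₂, c₂` are shifted by multiples of the logarithmic derivatives `∂ₓz₃/z₃`, `∂ᵧz₃/z₃`.
For two solutions of a homogeneous system the GL(3) derivatives read off its coefficients by
Cramer's rule, and the combinations `a₂`, `c₁`, `2b₂ − a₁`, `2b₁ − c₂` do not see the shift.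

The analytic input is that `∂ᵧf` is holomorphic in `x` when `f` is holomorphic in `(x, y)`
(needed for the mixed Leibniz rule): the difference quotients of `f` in `y` are holomorphic in
`x`, and Cauchy estimates make them converge to `∂ᵧf` uniformly, at rate `O(δ)`.
-/

open Complex Matrix

noncomputable section

open Metric Filter Topology Real

theorem norm_cauchyPowerSeries_coeff_le {f : ℂ → ℂ} {c : ℂ} {R M : ℝ} (hR : 0 < R)
    (hM : ∀ z ∈ sphere c R, ‖f z‖ ≤ M) (n : ℕ) :
    ‖(cauchyPowerSeries f c R).coeff n‖ ≤ M / R ^ n := by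
  have hint : ∫ θ in (0:ℝ)..2 * π, ‖f (circleMap c R θ)‖ ≤ 2 * π * M := by
    refine (le_abs_self _).trans ?_
    have := intervalIntegral.norm_integral_le_of_norm_le_const (a := 0) (b := 2 * π)
      (f := fun θ => ‖f (circleMap c R θ)‖) (C := M) fun θ _ => by
        simpa using hM _ (circleMap_mem_sphere c hR.le θ)
    simpa [Real.norm_eq_abs, abs_of_pos Real.pi_pos, mul_comm] using this
  calc ‖(cauchyPowerSeries f c R).coeff n‖ = ‖cauchyPowerSeries f c R n‖ :=
        FormalMultilinearSeries.norm_apply_eq_norm_coef.symm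
    _ ≤ ((2 * π)⁻¹ * ∫ θ in (0:ℝ)..2 * π, ‖f (circleMap c R θ)‖) * |R|⁻¹ ^ n :=
        norm_cauchyPowerSeries_le _ _ _ n
    _ ≤ ((2 * π)⁻¹ * (2 * π * M)) * |R|⁻¹ ^ n := by gcongr
    _ = M / R ^ n := by
        rw [abs_of_pos hR, inv_pow, ← mul_assoc, inv_mul_cancel₀ (by positivity), one_mul,
          div_eq_mul_inv]

theorem norm_sub_sub_mul_deriv_le {f : ℂ → ℂ} {c δ : ℂ} {R M : ℝ} (hR : 0 < R)
    (hf : DifferentiableOn ℂ f (closedBall c R)) (hM : ∀ z ∈ sphere c R, ‖f z‖ ≤ M)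
    (hδ : ‖δ‖ ≤ R / 2) :
    ‖f (c + δ) - f c - δ * deriv f c‖ ≤ 2 * M * ‖δ‖ ^ 2 / R ^ 2 := by
  lift R to NNReal using hR.le
  set P := cauchyPowerSeries f c R
  have hP : HasFPowerSeriesOnBall f P c R := hf.hasFPowerSeriesOnBall (mod_cast hR)
  set q := ‖δ‖ / R
  have hq0 : 0 ≤ q := by positivity
  have hq : q ≤ 1 / 2 := by rw [div_le_iff₀ hR]; linarith
  have hsum : HasSum (fun n => δ ^ n • P.coeff n) (f (c + δ)) := by
    have hδR : δ ∈ eball (0 : ℂ) R := by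
      rw [mem_eball, edist_zero_right]; exact_mod_cast (show ‖δ‖ < R by linarith)
    simpa [FormalMultilinearSeries.apply_eq_pow_smul_coeff] using hP.hasSum hδR
  have htail : HasSum (fun n => δ ^ (n + 2) • P.coeff (n + 2))
      (f (c + δ) - f c - δ * deriv f c) := by
    have h0 : P.coeff 0 = f c := hP.coeff_zero 1
    have h1 : P.coeff 1 = deriv f c := hP.hasFPowerSeriesAt.deriv.symm
    simpa [Finset.sum_range_succ, h0, h1, sub_sub] using
      (hasSum_nat_add_iff' (f := fun n => δ ^ n • P.coeff n) 2).2 hsum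
  have hterm : ∀ n, ‖δ ^ (n + 2) • P.coeff (n + 2)‖ ≤ M * q ^ 2 * q ^ n := fun n => by
    rw [norm_smul, norm_pow]
    calc ‖δ‖ ^ (n + 2) * ‖P.coeff (n + 2)‖ ≤ ‖δ‖ ^ (n + 2) * (M / R ^ (n + 2)) := by
          gcongr; exact norm_cauchyPowerSeries_coeff_le hR hM _
      _ = M * q ^ 2 * q ^ n := by rw [div_pow, div_pow, pow_add, pow_add]; field_simp
  have hgeom : HasSum (fun n => M * q ^ 2 * q ^ n) (M * q ^ 2 * (1 - q)⁻¹) :=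
    (hasSum_geometric_of_lt_one hq0 (by linarith)).mul_left _
  have hM0 : 0 ≤ M := (norm_nonneg _).trans (hM _ (circleMap_mem_sphere c hR.le 0))
  calc ‖f (c + δ) - f c - δ * deriv f c‖ ≤ M * q ^ 2 * (1 - q)⁻¹ :=
        htail.norm_le_of_bounded hgeom hterm
    _ ≤ M * q ^ 2 * 2 := by
        gcongr; rw [inv_le_comm₀ (by linarith) two_pos]; linarith
    _ = 2 * M * ‖δ‖ ^ 2 / R ^ 2 := by rw [div_pow]; field_simp

theorem differentiableOn_of_norm_sub_le {E ι : Type*} [NormedAddCommGroup E] [NormedSpace ℂ E]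
    [CompleteSpace E] {l : Filter ι} [l.NeBot] {F : ι → ℂ → E} {g : ℂ → E} {U : Set ℂ}
    {b : ι → ℝ} (hU : IsOpen U) (hF : ∀ᶠ i in l, DifferentiableOn ℂ (F i) U)
    (hb : Tendsto b l (𝓝 0)) (hFg : ∀ᶠ i in l, ∀ x ∈ U, ‖F i x - g x‖ ≤ b i) :
    DifferentiableOn ℂ g U := by
  have hlim : TendstoUniformlyOn F g l U := by
    refine Metric.tendstoUniformlyOn_iff.2 fun ε hε => ?_
    filter_upwards [hFg, hb.eventually (gt_mem_nhds hε)] with i hi hbi x hx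
    rw [dist_comm, dist_eq_norm]
    exact (hi x hx).trans_lt hbi
  exact hlim.tendstoLocallyUniformlyOn.differentiableOn hF hU

theorem DifferentiableAt.sliceX {f : ℂ × ℂ → ℂ} {x y : ℂ} (hf : DifferentiableAt ℂ f (x, y)) :
    DifferentiableAt ℂ (fun x' => f (x', y)) x :=
  hf.comp x (differentiableAt_id.prodMk (differentiableAt_const _))

theorem DifferentiableAt.sliceY {f : ℂ × ℂ → ℂ} {x y : ℂ} (hf : DifferentiableAt ℂ f (x, y)) :
    DifferentiableAt ℂ (fun y' => f (x, y')) y :=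
  hf.comp y ((differentiableAt_const _).prodMk differentiableAt_id)

theorem DifferentiableOn.differentiableAt_pdy_sliceX {Ω : Set (ℂ × ℂ)} {f : ℂ × ℂ → ℂ}
    (hΩ : IsOpen Ω) (hf : DifferentiableOn ℂ f Ω) {p : ℂ × ℂ} (hp : p ∈ Ω) :
    DifferentiableAt ℂ (fun x => pdy f (x, p.2)) p.1 := by
  obtain ⟨r, hr, hrΩ⟩ := nhds_basis_closedBall.mem_iff.1 (hΩ.mem_nhds hp)
  obtain ⟨M, hM⟩ := (isCompact_closedBall p r).exists_bound_of_continuousOn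
    (hf.mono hrΩ).continuousOn
  have hmem : ∀ {x y : ℂ}, x ∈ closedBall p.1 r → y ∈ closedBall p.2 r →
      (x, y) ∈ closedBall p r := fun hx hy => by rw [← closedBall_prod_same]; exact ⟨hx, hy⟩
  have hdiff : ∀ {x y : ℂ}, x ∈ closedBall p.1 r → y ∈ closedBall p.2 r →
      DifferentiableAt ℂ f (x, y) :=
    fun hx hy => hf.differentiableAt (hΩ.mem_nhds (hrΩ (hmem hx hy)))
  have hquot : DifferentiableOn ℂ (fun x => pdy f (x, p.2)) (ball p.1 r) := by
    refine differentiableOn_of_norm_sub_le (l := 𝓝[≠] (0 : ℂ))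
      (F := fun δ x => (f (x, p.2 + δ) - f (x, p.2)) / δ) (b := fun δ => 2 * M / r ^ 2 * ‖δ‖)
      isOpen_ball ?_ ?_ ?_
    · filter_upwards [nhdsWithin_le_nhds (closedBall_mem_nhds (0 : ℂ) hr)] with δ hδ x hx
      have hx := ball_subset_closedBall hx
      have hδ : p.2 + δ ∈ closedBall p.2 r := by simpa using hδ
      exact (((hdiff hx hδ).sliceX.sub (hdiff hx (mem_closedBall_self hr.le)).sliceX).div_const
        δ).differentiableWithinAt
    · simpa using (tendsto_norm_zero.const_mul (2 * M / r ^ 2)).mono_left nhdsWithin_le_nhds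
    · filter_upwards [self_mem_nhdsWithin,
        nhdsWithin_le_nhds (closedBall_mem_nhds (0 : ℂ) (half_pos hr))] with δ hδ0 hδ x hx
      have hx := ball_subset_closedBall hx
      have hδ0 : δ ≠ 0 := hδ0
      have hslice : DifferentiableOn ℂ (fun y => f (x, y)) (closedBall p.2 r) :=
        fun y hy => (hdiff hx hy).sliceY.differentiableWithinAt
      have hbound := norm_sub_sub_mul_deriv_le hr hslice
        (fun y hy => hM _ (hmem hx (sphere_subset_closedBall hy))) (by simpa using hδ)
      calc ‖(f (x, p.2 + δ) - f (x, p.2)) / δ - pdy f (x, p.2)‖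
          = ‖f (x, p.2 + δ) - f (x, p.2) - δ * pdy f (x, p.2)‖ / ‖δ‖ := by
            rw [← norm_div]; congr 1; field_simp
        _ ≤ 2 * M * ‖δ‖ ^ 2 / r ^ 2 / ‖δ‖ := by gcongr; exact hbound
        _ = 2 * M / r ^ 2 * ‖δ‖ := by field_simp
  exact hquot.differentiableAt (isOpen_ball.mem_nhds (mem_ball_self hr))

section PartialDerivatives

variable {Ω : Set (ℂ × ℂ)} {f g : ℂ × ℂ → ℂ} {p : ℂ × ℂ}

/- The `y`-statements are reduced to the `x`-statements: `pdy f p` is definitionally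
`pdx (f ∘ Prod.swap) p.swap`. -/
theorem DifferentiableOn.comp_swap (hf : DifferentiableOn ℂ f Ω) :
    DifferentiableOn ℂ (f ∘ Prod.swap) (Prod.swap ⁻¹' Ω) :=
  hf.comp (differentiable_snd.prodMk differentiable_fst).differentiableOn (Set.mapsTo_preimage _ _)

theorem Set.EqOn.pdx (hΩ : IsOpen Ω) (h : Set.EqOn f g Ω) : Set.EqOn (pdx f) (pdx g) Ω :=
  fun p hp => EventuallyEq.deriv_eq <| by
    filter_upwards [(continuous_id.prodMk continuous_const).continuousAt.preimage_mem_nhds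
      (hΩ.mem_nhds hp)] with x hx using h hx

theorem Set.EqOn.pdy (hΩ : IsOpen Ω) (h : Set.EqOn f g Ω) : Set.EqOn (pdy f) (pdy g) Ω :=
  fun p hp => (h.comp_right (Set.mapsTo_preimage Prod.swap Ω)).pdx
    (hΩ.preimage continuous_swap) (show p.swap ∈ Prod.swap ⁻¹' Ω by simpa using hp)

theorem DifferentiableOn.differentiableAt_sliceX (hΩ : IsOpen Ω) (hf : DifferentiableOn ℂ f Ω)
    (hp : p ∈ Ω) : DifferentiableAt ℂ (fun x => f (x, p.2)) p.1 :=
  (hf.differentiableAt (hΩ.mem_nhds hp)).sliceX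

theorem DifferentiableOn.differentiableAt_pdx_sliceX (hΩ : IsOpen Ω)
    (hf : DifferentiableOn ℂ f Ω) (hp : p ∈ Ω) :
    DifferentiableAt ℂ (fun x => pdx f (x, p.2)) p.1 := by
  have hs : IsOpen {x | (x, p.2) ∈ Ω} := hΩ.preimage (continuous_id.prodMk continuous_const)
  have hslice : DifferentiableOn ℂ (fun x => f (x, p.2)) {x | (x, p.2) ∈ Ω} :=
    fun x hx => (hf.differentiableAt_sliceX hΩ hx).differentiableWithinAt
  exact (hslice.deriv hs).differentiableAt (hs.mem_nhds hp)

theorem pdx_add (hf : DifferentiableAt ℂ (fun x => f (x, p.2)) p.1)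
    (hg : DifferentiableAt ℂ (fun x => g (x, p.2)) p.1) : pdx (f + g) p = pdx f p + pdx g p :=
  deriv_add hf hg

theorem pdx_mul (hf : DifferentiableAt ℂ (fun x => f (x, p.2)) p.1)
    (hg : DifferentiableAt ℂ (fun x => g (x, p.2)) p.1) :
    pdx (f * g) p = pdx f p * g p + f p * pdx g p :=
  deriv_mul hf hg

theorem pdx_mul_eqOn (hΩ : IsOpen Ω) (hf : DifferentiableOn ℂ f Ω) (hg : DifferentiableOn ℂ g Ω) :
    Set.EqOn (pdx (f * g)) (pdx f * g + f * pdx g) Ω :=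
  fun _ hq => pdx_mul (hf.differentiableAt_sliceX hΩ hq) (hg.differentiableAt_sliceX hΩ hq)

theorem pdy_mul_eqOn (hΩ : IsOpen Ω) (hf : DifferentiableOn ℂ f Ω) (hg : DifferentiableOn ℂ g Ω) :
    Set.EqOn (pdy (f * g)) (pdy f * g + f * pdy g) Ω :=
  fun q hq => pdx_mul_eqOn (hΩ.preimage continuous_swap) hf.comp_swap hg.comp_swap
    (show q.swap ∈ Prod.swap ⁻¹' Ω by simpa using hq)

theorem pdx_pdx_mul (hΩ : IsOpen Ω) (hf : DifferentiableOn ℂ f Ω) (hg : DifferentiableOn ℂ g Ω)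
    (hp : p ∈ Ω) :
    pdx (pdx (f * g)) p = pdx (pdx f) p * g p + 2 * (pdx f p * pdx g p) + f p * pdx (pdx g) p := by
  have hf₀ := hf.differentiableAt_sliceX hΩ hp
  have hg₀ := hg.differentiableAt_sliceX hΩ hp
  have hf₁ := hf.differentiableAt_pdx_sliceX hΩ hp
  have hg₁ := hg.differentiableAt_pdx_sliceX hΩ hp
  rw [(pdx_mul_eqOn hΩ hf hg).pdx hΩ hp, pdx_add (hf₁.mul hg₀) (hf₀.mul hg₁), pdx_mul hf₁ hg₀,
    pdx_mul hf₀ hg₁]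
  ring

theorem pdx_pdy_mul (hΩ : IsOpen Ω) (hf : DifferentiableOn ℂ f Ω) (hg : DifferentiableOn ℂ g Ω)
    (hp : p ∈ Ω) :
    pdx (pdy (f * g)) p = pdx (pdy f) p * g p + pdx f p * pdy g p + pdy f p * pdx g p
      + f p * pdx (pdy g) p := by
  have hf₀ := hf.differentiableAt_sliceX hΩ hp
  have hg₀ := hg.differentiableAt_sliceX hΩ hp
  have hf₁ := hf.differentiableAt_pdy_sliceX hΩ hp
  have hg₁ := hg.differentiableAt_pdy_sliceX hΩ hp
  rw [(pdy_mul_eqOn hΩ hf hg).pdx hΩ hp, pdx_add (hf₁.mul hg₀) (hf₀.mul hg₁), pdx_mul hf₁ hg₀,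
    pdx_mul hf₀ hg₁]
  ring

theorem pdy_pdy_mul (hΩ : IsOpen Ω) (hf : DifferentiableOn ℂ f Ω) (hg : DifferentiableOn ℂ g Ω)
    (hp : p ∈ Ω) :
    pdy (pdy (f * g)) p = pdy (pdy f) p * g p + 2 * (pdy f p * pdy g p) + f p * pdy (pdy g) p :=
  pdx_pdx_mul (hΩ.preimage continuous_swap) hf.comp_swap hg.comp_swap
    (show p.swap ∈ Prod.swap ⁻¹' Ω by simpa using hp)

end PartialDerivatives

def IsSolutionAt (a₁ a₂ a₃ b₁ b₂ b₃ c₁ c₂ c₃ : ℂ) (z : ℂ × ℂ → ℂ) (p : ℂ × ℂ) : Prop :=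
  pdx (pdx z) p = a₁ * pdx z p + a₂ * pdy z p + a₃ * z p ∧
  pdx (pdy z) p = b₁ * pdx z p + b₂ * pdy z p + b₃ * z p ∧
  pdy (pdy z) p = c₁ * pdx z p + c₂ * pdy z p + c₃ * z p

namespace IsSolutionAt

variable {Ω : Set (ℂ × ℂ)} {a₁ a₂ a₃ b₁ b₂ b₃ c₁ c₂ c₃ : ℂ} {z u w u₁ u₂ : ℂ × ℂ → ℂ}
  {p : ℂ × ℂ}

theorem congr (hΩ : IsOpen Ω) (h : IsSolutionAt a₁ a₂ a₃ b₁ b₂ b₃ c₁ c₂ c₃ z p)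
    (hzw : Set.EqOn z w Ω) (hp : p ∈ Ω) : IsSolutionAt a₁ a₂ a₃ b₁ b₂ b₃ c₁ c₂ c₃ w p := by
  simpa only [IsSolutionAt, (hzw.pdx hΩ).pdx hΩ hp, (hzw.pdy hΩ).pdx hΩ hp,
    (hzw.pdy hΩ).pdy hΩ hp, hzw.pdx hΩ hp, hzw.pdy hΩ hp, hzw hp] using h

theorem of_mul (hΩ : IsOpen Ω) (hu : DifferentiableOn ℂ u Ω) (hw : DifferentiableOn ℂ w Ω)
    (hp : p ∈ Ω) (hw₀ : w p ≠ 0) (huw : IsSolutionAt a₁ a₂ a₃ b₁ b₂ b₃ c₁ c₂ c₃ (u * w) p)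
    (hsw : IsSolutionAt a₁ a₂ a₃ b₁ b₂ b₃ c₁ c₂ c₃ w p) :
    IsSolutionAt (a₁ - 2 * (pdx w p / w p)) a₂ 0 (b₁ - pdy w p / w p) (b₂ - pdx w p / w p) 0
      c₁ (c₂ - 2 * (pdy w p / w p)) 0 u p := by
  obtain ⟨hxx, hxy, hyy⟩ := huw
  obtain ⟨wxx, wxy, wyy⟩ := hsw
  have hx : pdx (u * w) p = pdx u p * w p + u p * pdx w p := pdx_mul_eqOn hΩ hu hw hp
  have hy : pdy (u * w) p = pdy u p * w p + u p * pdy w p := pdy_mul_eqOn hΩ hu hw hp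
  rw [pdx_pdx_mul hΩ hu hw hp, hx, hy, Pi.mul_apply] at hxx
  rw [pdx_pdy_mul hΩ hu hw hp, hx, hy, Pi.mul_apply] at hxy
  rw [pdy_pdy_mul hΩ hu hw hp, hx, hy, Pi.mul_apply] at hyy
  refine ⟨?_, ?_, ?_⟩ <;> field_simp
  · linear_combination hxx - u p * wxx
  · linear_combination hxy - u p * wxy
  · linear_combination hyy - u p * wyy

theorem brX_eq (h₁ : IsSolutionAt a₁ a₂ 0 b₁ b₂ 0 c₁ c₂ 0 u₁ p)
    (h₂ : IsSolutionAt a₁ a₂ 0 b₁ b₂ 0 c₁ c₂ 0 u₂ p) (hJ : Jac u₁ u₂ p ≠ 0) :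
    brX u₁ u₂ p = a₂ := by
  rw [brX, div_eq_iff hJ, Jac, h₁.1, h₂.1]; ring

theorem brY_eq (h₁ : IsSolutionAt a₁ a₂ 0 b₁ b₂ 0 c₁ c₂ 0 u₁ p)
    (h₂ : IsSolutionAt a₁ a₂ 0 b₁ b₂ 0 c₁ c₂ 0 u₂ p) (hJ : Jac u₁ u₂ p ≠ 0) :
    brY u₁ u₂ p = c₁ := by
  rw [brY, div_eq_iff hJ, Jac, h₁.2.2, h₂.2.2]; ring

theorem sqX_eq (h₁ : IsSolutionAt a₁ a₂ 0 b₁ b₂ 0 c₁ c₂ 0 u₁ p)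
    (h₂ : IsSolutionAt a₁ a₂ 0 b₁ b₂ 0 c₁ c₂ 0 u₂ p) (hJ : Jac u₁ u₂ p ≠ 0) :
    sqX u₁ u₂ p = 2 * b₂ - a₁ := by
  rw [sqX, div_eq_iff hJ, Jac, h₁.1, h₂.1, h₁.2.1, h₂.2.1]; ring

theorem sqY_eq (h₁ : IsSolutionAt a₁ a₂ 0 b₁ b₂ 0 c₁ c₂ 0 u₁ p)
    (h₂ : IsSolutionAt a₁ a₂ 0 b₁ b₂ 0 c₁ c₂ 0 u₂ p) (hJ : Jac u₁ u₂ p ≠ 0) :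
    sqY u₁ u₂ p = 2 * b₁ - c₂ := by
  rw [sqY, div_eq_iff hJ, Jac, h₁.2.2, h₂.2.2, h₁.2.1, h₂.2.1]; ring

end IsSolutionAt

theorem statement9_general (Ω : Set (ℂ × ℂ)) (hΩ : IsOpen Ω)
    (a₁ a₂ a₃ b₁ b₂ b₃ c₁ c₂ c₃ : ℂ × ℂ → ℂ)
    (z₁ z₂ z₃ : ℂ × ℂ → ℂ)
    (hz₁ : DifferentiableOn ℂ z₁ Ω) (hz₂ : DifferentiableOn ℂ z₂ Ω)
    (hz₃ : DifferentiableOn ℂ z₃ Ω)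
    (hsys₁ : ∀ p ∈ Ω,
      pdx (pdx z₁) p = a₁ p * pdx z₁ p + a₂ p * pdy z₁ p + a₃ p * z₁ p ∧
      pdx (pdy z₁) p = b₁ p * pdx z₁ p + b₂ p * pdy z₁ p + b₃ p * z₁ p ∧
      pdy (pdy z₁) p = c₁ p * pdx z₁ p + c₂ p * pdy z₁ p + c₃ p * z₁ p)
    (hsys₂ : ∀ p ∈ Ω,
      pdx (pdx z₂) p = a₁ p * pdx z₂ p + a₂ p * pdy z₂ p + a₃ p * z₂ p ∧
      pdx (pdy z₂) p = b₁ p * pdx z₂ p + b₂ p * pdy z₂ p + b₃ p * z₂ p ∧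
      pdy (pdy z₂) p = c₁ p * pdx z₂ p + c₂ p * pdy z₂ p + c₃ p * z₂ p)
    (hsys₃ : ∀ p ∈ Ω,
      pdx (pdx z₃) p = a₁ p * pdx z₃ p + a₂ p * pdy z₃ p + a₃ p * z₃ p ∧
      pdx (pdy z₃) p = b₁ p * pdx z₃ p + b₂ p * pdy z₃ p + b₃ p * z₃ p ∧
      pdy (pdy z₃) p = c₁ p * pdx z₃ p + c₂ p * pdy z₃ p + c₃ p * z₃ p)
    (hz₃0 : ∀ p ∈ Ω, z₃ p ≠ 0)
    (u₁ u₂ : ℂ × ℂ → ℂ)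
    (hu₁ : u₁ = fun p => z₁ p / z₃ p) (hu₂ : u₂ = fun p => z₂ p / z₃ p)
    (hJ : ∀ p ∈ Ω, Jac u₁ u₂ p ≠ 0) :
    ∀ p ∈ Ω,
      brX u₁ u₂ p = a₂ p ∧
      brY u₁ u₂ p = c₁ p ∧
      sqX u₁ u₂ p = 2 * b₂ p - a₁ p ∧
      sqY u₁ u₂ p = 2 * b₁ p - c₂ p := by
  intro p hp
  have hdiff : ∀ {z : ℂ × ℂ → ℂ}, DifferentiableOn ℂ z Ω →
      DifferentiableOn ℂ (fun q => z q / z₃ q) Ω :=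
    fun hz q hq => by
      simp only [div_eq_mul_inv]
      exact (hz q hq).mul ((hz₃ q hq).inv (hz₃0 q hq))
  have hratio : ∀ {z u : ℂ × ℂ → ℂ}, u = (fun q => z q / z₃ q) → Set.EqOn z (u * z₃) Ω :=
    fun hu q hq => by simp [hu, div_mul_cancel₀ _ (hz₃0 q hq)]
  have hs₃ : IsSolutionAt (a₁ p) (a₂ p) (a₃ p) (b₁ p) (b₂ p) (b₃ p) (c₁ p) (c₂ p) (c₃ p) z₃ p :=
    hsys₃ p hp
  have hs₁ := (IsSolutionAt.congr hΩ (hsys₁ p hp) (hratio hu₁) hp).of_mul hΩ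
    (hu₁ ▸ hdiff hz₁) hz₃ hp (hz₃0 p hp) hs₃
  have hs₂ := (IsSolutionAt.congr hΩ (hsys₂ p hp) (hratio hu₂) hp).of_mul hΩ
    (hu₂ ▸ hdiff hz₂) hz₃ hp (hz₃0 p hp) hs₃
  exact ⟨hs₁.brX_eq hs₂ (hJ p hp), hs₁.brY_eq hs₂ (hJ p hp),
    (hs₁.sqX_eq hs₂ (hJ p hp)).trans (by ring), (hs₁.sqY_eq hs₂ (hJ p hp)).trans (by ring)⟩

/-- If `z₁,z₂,z₃` solve the linear system
`∂ₓₓz = a₁∂ₓz + a₂∂ᵧz + a₃z`, `∂ₓᵧz = b₁∂ₓz + b₂∂ᵧz + b₃z`,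
`∂ᵧᵧz = c₁∂ₓz + c₂∂ᵧz + c₃z`, then the ratios `u₁ = z₁/z₃`, `u₂ = z₂/z₃` satisfy
`{u₁,u₂;x,y}ₓ = a₂`, `{u₁,u₂;x,y}ᵧ = c₁`, `[u₁,u₂;x,y]ₓ = 2b₂ − a₁`,
`[u₁,u₂;x,y]ᵧ = 2b₁ − c₂`. -/
theorem statement9 (Ω : Set (ℂ × ℂ)) (hΩ : IsOpen Ω)
    (a₁ a₂ a₃ b₁ b₂ b₃ c₁ c₂ c₃ : ℂ × ℂ → ℂ)
    (ha₁ : DifferentiableOn ℂ a₁ Ω) (ha₂ : DifferentiableOn ℂ a₂ Ω)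
    (ha₃ : DifferentiableOn ℂ a₃ Ω) (hb₁ : DifferentiableOn ℂ b₁ Ω)
    (hb₂ : DifferentiableOn ℂ b₂ Ω) (hb₃ : DifferentiableOn ℂ b₃ Ω)
    (hc₁ : DifferentiableOn ℂ c₁ Ω) (hc₂ : DifferentiableOn ℂ c₂ Ω)
    (hc₃ : DifferentiableOn ℂ c₃ Ω)
    (z₁ z₂ z₃ : ℂ × ℂ → ℂ)
    (hz₁ : DifferentiableOn ℂ z₁ Ω) (hz₂ : DifferentiableOn ℂ z₂ Ω)
    (hz₃ : DifferentiableOn ℂ z₃ Ω)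
    (hsys₁ : ∀ p ∈ Ω,
      pdx (pdx z₁) p = a₁ p * pdx z₁ p + a₂ p * pdy z₁ p + a₃ p * z₁ p ∧
      pdx (pdy z₁) p = b₁ p * pdx z₁ p + b₂ p * pdy z₁ p + b₃ p * z₁ p ∧
      pdy (pdy z₁) p = c₁ p * pdx z₁ p + c₂ p * pdy z₁ p + c₃ p * z₁ p)
    (hsys₂ : ∀ p ∈ Ω,
      pdx (pdx z₂) p = a₁ p * pdx z₂ p + a₂ p * pdy z₂ p + a₃ p * z₂ p ∧
      pdx (pdy z₂) p = b₁ p * pdx z₂ p + b₂ p * pdy z₂ p + b₃ p * z₂ p ∧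
      pdy (pdy z₂) p = c₁ p * pdx z₂ p + c₂ p * pdy z₂ p + c₃ p * z₂ p)
    (hsys₃ : ∀ p ∈ Ω,
      pdx (pdx z₃) p = a₁ p * pdx z₃ p + a₂ p * pdy z₃ p + a₃ p * z₃ p ∧
      pdx (pdy z₃) p = b₁ p * pdx z₃ p + b₂ p * pdy z₃ p + b₃ p * z₃ p ∧
      pdy (pdy z₃) p = c₁ p * pdx z₃ p + c₂ p * pdy z₃ p + c₃ p * z₃ p)
    (hz₃0 : ∀ p ∈ Ω, z₃ p ≠ 0)
    (u₁ u₂ : ℂ × ℂ → ℂ)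
    (hu₁ : u₁ = fun p => z₁ p / z₃ p) (hu₂ : u₂ = fun p => z₂ p / z₃ p)
    (hJ : ∀ p ∈ Ω, Jac u₁ u₂ p ≠ 0) :
    ∀ p ∈ Ω,
      brX u₁ u₂ p = a₂ p ∧
      brY u₁ u₂ p = c₁ p ∧
      sqX u₁ u₂ p = 2 * b₂ p - a₁ p ∧
      sqY u₁ u₂ p = 2 * b₁ p - c₂ p :=
  statement9_general Ω hΩ a₁ a₂ a₃ b₁ b₂ b₃ c₁ c₂ c₃ z₁ z₂ z₃ hz₁ hz₂ hz₃ hsys₁ hsys₂ hsys₃ hz₃0 u₁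
    u₂ hu₁ hu₂ hJ
end
end

section
/- (Main Theorem 3.) Let u₁,u₂,v₁,v₂ ∈ ℂ with u₁,u₂,v₁,v₂ ∉ {0,1}, u₁ ≠ u₂, v₁ ≠ v₂, satisfying the modular equation (u₁−1)(u₂−1)(u₁−u₂) = (v₁−1)(v₂−1)(v₁−v₂). Define α := ((v₁−1)(v₂−1)(v₁+v₂−2) − (u₁−1)(u₂−1)(u₁+u₂−2))/(2(u₁−1)(u₂−1)(v₁−1)(v₂−1)), β := (−(v₁−1)(v₂−1)(2v₁v₂−v₁−v₂) + (u₁−1)(u₂−1)(2u₁u₂−u₁−u₂))/(2(u₁−1)(u₂−1)(v₁−1)(v₂−1)), γ := (v₁−1)(v₂−1)/((u₁−1)(u₂−1)). For (t₁,t₂) ∈ ℂ² with t₂ ≠ 0 and βt₁+(α+γ) ≠ 0, define w₁ := ((β+γ)t₁+α)/(βt₁+(α+γ)) and w₂ := t₁((β+γ)t₁+α)²(βt₁+(α+γ))/t₂⁵, and let J(t₁,t₂) := ∂_{t₁}w₁·∂_{t₂}w₂ − ∂_{t₁}w₂·∂_{t₂}w₁ be the Jacobian of the map (t₁,t₂)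 ↦ (w₁,w₂). Then the identity J(t₁,t₂)³ · t₁²t₂²(1−t₁)(1−u₁t₁)(1−u₂t₁) = (−125·t₁³/t₂⁶) · w₁²w₂²(1−w₁)(1−v₁w₁)(1−v₂w₁) holds; equivalently, the differential form dw₁∧dw₂ divided by the cube root of w₁²w₂²(1−w₁)(1−v₁w₁)(1−v₂w₁) equals (−5t₁/t₂²) times dt₁∧dt₂ divided by the cube root of t₁²t₂²(1−t₁)(1−u₁t₁)(1−u₂t₁). -/
/-!
Write `N = (β+γ)t₁ + α` and `D = βt₁ + (α+γ)`. The map `t₁ ↦ w₁ = N/D` is a Möbius transformation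
whose matrix has determinant `γ(α+β+γ) = 1`, so `∂w₁/∂t₁ = 1/D²`; since `w₁` does not depend on
`t₂`, the Jacobian is triangular and equals `-5 t₁ N² / (D t₂⁶)`. On the other side,
`D³ (1-w₁)(1-v₁w₁)(1-v₂w₁) = (D-N)(D-v₁N)(D-v₂N)`, where `D - N = γ(1-t₁)` and, by the modular
equation, `γ(D-v₁N)(D-v₂N) = (1-u₁t₁)(1-u₂t₁)`: the Möbius map sends the branch points
`1, 1/u₁, 1/u₂` to `1, 1/v₁, 1/v₂`. The identity is then a computation with rational functions.
-/

open Complex Matrix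

noncomputable section

theorem pdx_comp_fst (f : ℂ → ℂ) (p : ℂ × ℂ) : pdx (fun q => f q.1) p = deriv f p.1 := rfl

theorem pdy_comp_fst (f : ℂ → ℂ) (p : ℂ × ℂ) : pdy (fun q => f q.1) p = 0 :=
  deriv_const p.2 (f p.1)

theorem jac_comp_fst_left (f : ℂ → ℂ) (g : ℂ × ℂ → ℂ) (p : ℂ × ℂ) :
    Jac (fun q => f q.1) g p = deriv f p.1 * pdy g p := by
  simp only [Jac, pdx_comp_fst, pdy_comp_fst, mul_zero, sub_zero]

theorem pdy_div_pow (g : ℂ → ℂ) (n : ℕ) {p : ℂ × ℂ} (hp : p.2 ≠ 0) :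
    pdy (fun q => g q.1 / q.2 ^ n) p = -(n * g p.1 / p.2 ^ (n + 1)) := by
  refine ((hasDerivAt_const p.2 (g p.1)).div (hasDerivAt_pow n p.2)
    (pow_ne_zero n hp)).deriv.trans ?_
  rcases n with _ | n
  · simp
  · rw [Nat.add_sub_cancel]
    field_simp
    ring

theorem deriv_linear_fractional {𝕜 : Type*} [NontriviallyNormedField 𝕜] {a b c d x : 𝕜}
    (hx : c * x + d ≠ 0) :
    deriv (fun x => (a * x + b) / (c * x + d)) x = (a * d - b * c) / (c * x + d) ^ 2 := by
  have hnum : HasDerivAt (fun x => a * x + b) a x := by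
    simpa using ((hasDerivAt_id x).const_mul a).add_const b
  have hden : HasDerivAt (fun x => c * x + d) c x := by
    simpa using ((hasDerivAt_id x).const_mul c).add_const d
  refine (hnum.div hden hx).deriv.trans ?_
  ring

section Moduli

variable {u₁ u₂ v₁ v₂ α β γ : ℂ}

theorem mobius_det_eq_one (hu₁ : u₁ ≠ 1) (hu₂ : u₂ ≠ 1) (hv₁ : v₁ ≠ 1) (hv₂ : v₂ ≠ 1)
    (hα : α = ((v₁ - 1) * (v₂ - 1) * (v₁ + v₂ - 2)
        - (u₁ - 1) * (u₂ - 1) * (u₁ + u₂ - 2))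
        / (2 * (u₁ - 1) * (u₂ - 1) * (v₁ - 1) * (v₂ - 1)))
    (hβ : β = (-((v₁ - 1) * (v₂ - 1) * (2 * (v₁ * v₂) - v₁ - v₂))
        + (u₁ - 1) * (u₂ - 1) * (2 * (u₁ * u₂) - u₁ - u₂))
        / (2 * (u₁ - 1) * (u₂ - 1) * (v₁ - 1) * (v₂ - 1)))
    (hγ : γ = (v₁ - 1) * (v₂ - 1) / ((u₁ - 1) * (u₂ - 1))) :
    (β + γ) * (α + γ) - α * β = 1 := by
  have := sub_ne_zero.2 hu₁; have := sub_ne_zero.2 hu₂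
  have := sub_ne_zero.2 hv₁; have := sub_ne_zero.2 hv₂
  subst hα hβ hγ
  field_simp
  ring

/-- With `E = (u₁-1)(u₂-1)` and `F = (v₁-1)(v₂-1)`, the two sides differ by a multiple of
`(1-t)² (E²(u₁-u₂)² - F²(v₁-v₂)²)`. -/
theorem branch_quadratic_pullback (t : ℂ)
    (hu₁ : u₁ ≠ 1) (hu₂ : u₂ ≠ 1) (hv₁ : v₁ ≠ 1) (hv₂ : v₂ ≠ 1)
    (hdisc : ((u₁ - 1) * (u₂ - 1)) ^ 2 * (u₁ - u₂) ^ 2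
      = ((v₁ - 1) * (v₂ - 1)) ^ 2 * (v₁ - v₂) ^ 2)
    (hα : α = ((v₁ - 1) * (v₂ - 1) * (v₁ + v₂ - 2)
        - (u₁ - 1) * (u₂ - 1) * (u₁ + u₂ - 2))
        / (2 * (u₁ - 1) * (u₂ - 1) * (v₁ - 1) * (v₂ - 1)))
    (hβ : β = (-((v₁ - 1) * (v₂ - 1) * (2 * (v₁ * v₂) - v₁ - v₂))
        + (u₁ - 1) * (u₂ - 1) * (2 * (u₁ * u₂) - u₁ - u₂))
        / (2 * (u₁ - 1) * (u₂ - 1) * (v₁ - 1) * (v₂ - 1)))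
    (hγ : γ = (v₁ - 1) * (v₂ - 1) / ((u₁ - 1) * (u₂ - 1))) :
    γ * ((β * t + (α + γ) - v₁ * ((β + γ) * t + α))
      * (β * t + (α + γ) - v₂ * ((β + γ) * t + α))) = (1 - u₁ * t) * (1 - u₂ * t) := by
  have := sub_ne_zero.2 hu₁; have := sub_ne_zero.2 hu₂
  have := sub_ne_zero.2 hv₁; have := sub_ne_zero.2 hv₂
  have hKα : 2 * ((u₁ - 1) * (u₂ - 1)) * ((v₁ - 1) * (v₂ - 1)) * α
      = (v₁ - 1) * (v₂ - 1) * (v₁ + v₂ - 2) - (u₁ - 1) * (u₂ - 1) * (u₁ + u₂ - 2) := by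
    rw [hα]; field_simp
  have hKβ : 2 * ((u₁ - 1) * (u₂ - 1)) * ((v₁ - 1) * (v₂ - 1)) * β
      = 2 * ((u₁ - 1) * (u₂ - 1)) ^ 2 - 2 * ((v₁ - 1) * (v₂ - 1)) ^ 2
        - ((v₁ - 1) * (v₂ - 1) * (v₁ + v₂ - 2) - (u₁ - 1) * (u₂ - 1) * (u₁ + u₂ - 2)) := by
    rw [hβ]; field_simp; ring
  have hEγ : (u₁ - 1) * (u₂ - 1) * γ = (v₁ - 1) * (v₂ - 1) := by rw [hγ]; field_simp
  have hE : (u₁ - 1) * (u₂ - 1) ≠ 0 := by positivity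
  have hF : (v₁ - 1) * (v₂ - 1) ≠ 0 := by positivity
  generalize hA : (v₁ - 1) * (v₂ - 1) * (v₁ + v₂ - 2)
    - (u₁ - 1) * (u₂ - 1) * (u₁ + u₂ - 2) = A at *
  generalize hE_def : (u₁ - 1) * (u₂ - 1) = E at *
  generalize hF_def : (v₁ - 1) * (v₂ - 1) = F at *
  generalize hD : β * t + (α + γ) = D
  generalize hN : (β + γ) * t + α = N
  have hX : ∀ v, 2 * E * F * (D - v * N)
      = (1 - v) * (A * (1 - t) + 2 * E ^ 2 * t) + 2 * F ^ 2 * (1 - t) := fun v => by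
    subst hD hN
    linear_combination (t - v * t) * hKβ + (1 - v) * hKα + 2 * F * (1 - v * t) * hEγ
  have hK : (2 * E * F) ^ 2 * E ≠ 0 :=
    mul_ne_zero (pow_ne_zero 2 (mul_ne_zero (mul_ne_zero two_ne_zero hE) hF)) hE
  apply mul_left_cancel₀ hK
  calc (2 * E * F) ^ 2 * E * (γ * ((D - v₁ * N) * (D - v₂ * N)))
      = F * ((2 * E * F * (D - v₁ * N)) * (2 * E * F * (D - v₂ * N))) := by
        linear_combination (2 * E * F) ^ 2 * ((D - v₁ * N) * (D - v₂ * N)) * hEγ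
    _ = F * (((1 - v₁) * (A * (1 - t) + 2 * E ^ 2 * t) + 2 * F ^ 2 * (1 - t))
          * ((1 - v₂) * (A * (1 - t) + 2 * E ^ 2 * t) + 2 * F ^ 2 * (1 - t))) := by
        rw [hX, hX]
    _ = (2 * E * F) ^ 2 * E * ((1 - u₁ * t) * (1 - u₂ * t)) := by
        subst hA hE_def hF_def
        linear_combination ((v₁ - 1) * (v₂ - 1)) ^ 2 * (1 - t) ^ 2 * hdisc

end Moduli

theorem statement13_general (u₁ u₂ v₁ v₂ : ℂ)
    (hu₁1 : u₁ ≠ 1) (hu₂1 : u₂ ≠ 1)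
    (hv₁1 : v₁ ≠ 1) (hv₂1 : v₂ ≠ 1)
    (hmod : (u₁ - 1) * (u₂ - 1) * (u₁ - u₂) = (v₁ - 1) * (v₂ - 1) * (v₁ - v₂))
    (α β γ : ℂ)
    (hα : α = ((v₁ - 1) * (v₂ - 1) * (v₁ + v₂ - 2)
        - (u₁ - 1) * (u₂ - 1) * (u₁ + u₂ - 2))
        / (2 * (u₁ - 1) * (u₂ - 1) * (v₁ - 1) * (v₂ - 1)))
    (hβ : β = (-((v₁ - 1) * (v₂ - 1) * (2 * (v₁ * v₂) - v₁ - v₂))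
        + (u₁ - 1) * (u₂ - 1) * (2 * (u₁ * u₂) - u₁ - u₂))
        / (2 * (u₁ - 1) * (u₂ - 1) * (v₁ - 1) * (v₂ - 1)))
    (hγ : γ = (v₁ - 1) * (v₂ - 1) / ((u₁ - 1) * (u₂ - 1)))
    (w₁ w₂ : ℂ × ℂ → ℂ)
    (hw₁ : w₁ = fun t => ((β + γ) * t.1 + α) / (β * t.1 + (α + γ)))
    (hw₂ : w₂ = fun t =>
      t.1 * ((β + γ) * t.1 + α) ^ 2 * (β * t.1 + (α + γ)) / t.2 ^ 5) :
    ∀ t : ℂ × ℂ, t.2 ≠ 0 → β * t.1 + (α + γ) ≠ 0 →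
      (Jac w₁ w₂ t) ^ 3 *
          (t.1 ^ 2 * t.2 ^ 2 * (1 - t.1) * (1 - u₁ * t.1) * (1 - u₂ * t.1)) =
        (-125 * t.1 ^ 3 / t.2 ^ 6) *
          ((w₁ t) ^ 2 * (w₂ t) ^ 2 * (1 - w₁ t) * (1 - v₁ * w₁ t)
            * (1 - v₂ * w₁ t)) := by
  rintro ⟨t, s⟩ hs hD
  dsimp only at hs hD ⊢
  have hdet := mobius_det_eq_one hu₁1 hu₂1 hv₁1 hv₂1 hα hβ hγ
  have hquad := branch_quadratic_pullback t hu₁1 hu₂1 hv₁1 hv₂1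
    (by rw [← mul_pow, ← mul_pow, hmod]) hα hβ hγ
  have hJ : Jac w₁ w₂ (t, s)
      = -(5 * t * ((β + γ) * t + α) ^ 2 / ((β * t + (α + γ)) * s ^ 6)) := by
    subst hw₁ hw₂
    rw [jac_comp_fst_left (fun x => ((β + γ) * x + α) / (β * x + (α + γ))),
      deriv_linear_fractional hD, hdet,
      pdy_div_pow (fun x => x * ((β + γ) * x + α) ^ 2 * (β * x + (α + γ))) 5 hs]
    field_simp
    ring
  have hbranch : t ^ 2 * s ^ 2 * (1 - t) * (1 - u₁ * t) * (1 - u₂ * t)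
      = t ^ 2 * s ^ 2 * ((β * t + (α + γ) - ((β + γ) * t + α))
        * (β * t + (α + γ) - v₁ * ((β + γ) * t + α))
        * (β * t + (α + γ) - v₂ * ((β + γ) * t + α))) := by
    linear_combination t ^ 2 * s ^ 2 * (t - 1) * hquad
  rw [hJ, hbranch, hw₁, hw₂]
  dsimp only
  generalize (β + γ) * t + α = N
  generalize β * t + (α + γ) = D at hD ⊢
  field_simp
  ring

/-- **Main Theorem 3.** The rational transformation of order five
between the two irrational differential forms attached to the algebraic surfaces with
moduli `(u₁,u₂)` and `(v₁,v₂)` satisfying the modular equation. The stated identity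
is the cubed form of the differential-form identity. -/
theorem statement13 (u₁ u₂ v₁ v₂ : ℂ)
    (hu₁0 : u₁ ≠ 0) (hu₁1 : u₁ ≠ 1) (hu₂0 : u₂ ≠ 0) (hu₂1 : u₂ ≠ 1)
    (hv₁0 : v₁ ≠ 0) (hv₁1 : v₁ ≠ 1) (hv₂0 : v₂ ≠ 0) (hv₂1 : v₂ ≠ 1)
    (huu : u₁ ≠ u₂) (hvv : v₁ ≠ v₂)
    (hmod : (u₁ - 1) * (u₂ - 1) * (u₁ - u₂) = (v₁ - 1) * (v₂ - 1) * (v₁ - v₂))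
    (α β γ : ℂ)
    (hα : α = ((v₁ - 1) * (v₂ - 1) * (v₁ + v₂ - 2)
        - (u₁ - 1) * (u₂ - 1) * (u₁ + u₂ - 2))
        / (2 * (u₁ - 1) * (u₂ - 1) * (v₁ - 1) * (v₂ - 1)))
    (hβ : β = (-((v₁ - 1) * (v₂ - 1) * (2 * (v₁ * v₂) - v₁ - v₂))
        + (u₁ - 1) * (u₂ - 1) * (2 * (u₁ * u₂) - u₁ - u₂))
        / (2 * (u₁ - 1) * (u₂ - 1) * (v₁ - 1) * (v₂ - 1)))
    (hγ : γ = (v₁ - 1) * (v₂ - 1) / ((u₁ - 1) * (u₂ - 1)))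
    (w₁ w₂ : ℂ × ℂ → ℂ)
    (hw₁ : w₁ = fun t => ((β + γ) * t.1 + α) / (β * t.1 + (α + γ)))
    (hw₂ : w₂ = fun t =>
      t.1 * ((β + γ) * t.1 + α) ^ 2 * (β * t.1 + (α + γ)) / t.2 ^ 5) :
    ∀ t : ℂ × ℂ, t.2 ≠ 0 → β * t.1 + (α + γ) ≠ 0 →
      (Jac w₁ w₂ t) ^ 3 *
          (t.1 ^ 2 * t.2 ^ 2 * (1 - t.1) * (1 - u₁ * t.1) * (1 - u₂ * t.1)) =
        (-125 * t.1 ^ 3 / t.2 ^ 6) *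
          ((w₁ t) ^ 2 * (w₂ t) ^ 2 * (1 - w₁ t) * (1 - v₁ * w₁ t)
            * (1 - v₂ * w₁ t)) :=
  statement13_general u₁ u₂ v₁ v₂ hu₁1 hu₂1 hv₁1 hv₂1 hmod α β γ hα hβ hγ w₁ w₂ hw₁ hw₂
end
end

section
/- (Main Proposition 3, part (1).) Fix α,β,γ ∈ ℂ, and define F₁(γ;v₁,v₂) := −γv₂(v₂−1)/(v₁(v₁−1)(v₁−v₂)), F₂(γ;v₁,v₂) := −γv₁(v₁−1)/(v₂(v₂−1)(v₂−v₁)), P₁(α,β,γ;v₁,v₂) := α/v₁ + β/(v₁−1) + γ/(v₁−v₂), P₂(α,β,γ;v₁,v₂) := α/v₂ + β/(v₂−1) + γ/(v₂−v₁). Let T(v₁,v₂) := (1−v₁, 1−v₂). Let s₁,s₂ be holomorphic on an open set D of points (v₁,v₂) with v₁,v₂ ∉ {0,1}, v₁ ≠ v₂, with J(s₁,s₂) ≠ 0, satisfying {s₁,s₂;v₁,v₂}_{v₁} = F₁(γ;v₁,v₂), {s₁,s₂;v₁,v₂}_{v₂} = F₂(γ;v₁,v₂), [s₁,s₂;v₁,v₂]_{v₁}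 = P₁(α,β,γ;v₁,v₂), [s₁,s₂;v₁,v₂]_{v₂} = P₂(α,β,γ;v₁,v₂) on D. Then at every point (v₁,v₂) with v₁,v₂ ∉ {0,1}, v₁ ≠ v₂ and T(v₁,v₂) ∈ D, the composed pair (s₁∘T, s₂∘T) satisfies {s₁∘T, s₂∘T; v₁,v₂}_{v₁} = F₁(γ;v₁,v₂), {s₁∘T, s₂∘T; v₁,v₂}_{v₂} = F₂(γ;v₁,v₂), [s₁∘T, s₂∘T; v₁,v₂]_{v₁} = P₁(β,α,γ;v₁,v₂), and [s₁∘T, s₂∘T; v₁,v₂]_{v₂} = P₂(β,α,γ;v₁,v₂). -/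
open Complex Matrix

noncomputable section

/-- The coefficient `F₁(γ;v₁,v₂)`. -/
def F1 (γ : ℂ) (p : ℂ × ℂ) : ℂ :=
  -γ * p.2 * (p.2 - 1) / (p.1 * (p.1 - 1) * (p.1 - p.2))

/-- The coefficient `F₂(γ;v₁,v₂)`. -/
def F2 (γ : ℂ) (p : ℂ × ℂ) : ℂ :=
  -γ * p.1 * (p.1 - 1) / (p.2 * (p.2 - 1) * (p.2 - p.1))

/-- The coefficient `P₁(α,β,γ;v₁,v₂)`. -/
def P1 (α β γ : ℂ) (p : ℂ × ℂ) : ℂ := α / p.1 + β / (p.1 - 1) + γ / (p.1 - p.2)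

/-- The coefficient `P₂(α,β,γ;v₁,v₂)`. -/
def P2 (α β γ : ℂ) (p : ℂ × ℂ) : ℂ := α / p.2 + β / (p.2 - 1) + γ / (p.2 - p.1)

/-- The involution `T(v₁,v₂) = (1−v₁, 1−v₂)`. -/
def Tmap (p : ℂ × ℂ) : ℂ × ℂ := (1 - p.1, 1 - p.2)


lemma pdx_Tcomp (f : ℂ × ℂ → ℂ) (p : ℂ × ℂ) :
    pdx (fun q => f (Tmap q)) p = -pdx f (Tmap p) := by
  unfold pdx Tmap
  exact deriv_comp_const_sub (f := fun x => f (x, 1 - p.2)) 1 p.1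

lemma pdy_Tcomp (f : ℂ × ℂ → ℂ) (p : ℂ × ℂ) :
    pdy (fun q => f (Tmap q)) p = -pdy f (Tmap p) := by
  unfold pdy Tmap
  exact deriv_comp_const_sub (f := fun y => f (1 - p.1, y)) 1 p.2

lemma pdx_neg (g : ℂ × ℂ → ℂ) (p : ℂ × ℂ) :
    pdx (fun q => -g q) p = -pdx g p := by
  unfold pdx; exact deriv.neg

lemma pdy_neg (g : ℂ × ℂ → ℂ) (p : ℂ × ℂ) :
    pdy (fun q => -g q) p = -pdy g p := by
  unfold pdy; exact deriv.neg

lemma pdxx_Tcomp (f : ℂ × ℂ → ℂ) (p : ℂ × ℂ) :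
    pdx (pdx (fun q => f (Tmap q))) p = pdx (pdx f) (Tmap p) := by
  have h : pdx (fun q => f (Tmap q)) = fun q => -pdx f (Tmap q) := funext (pdx_Tcomp f)
  rw [h, pdx_neg, pdx_Tcomp, neg_neg]

lemma pdyy_Tcomp (f : ℂ × ℂ → ℂ) (p : ℂ × ℂ) :
    pdy (pdy (fun q => f (Tmap q))) p = pdy (pdy f) (Tmap p) := by
  have h : pdy (fun q => f (Tmap q)) = fun q => -pdy f (Tmap q) := funext (pdy_Tcomp f)
  rw [h, pdy_neg, pdy_Tcomp, neg_neg]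

lemma pdxy_Tcomp (f : ℂ × ℂ → ℂ) (p : ℂ × ℂ) :
    pdx (pdy (fun q => f (Tmap q))) p = pdx (pdy f) (Tmap p) := by
  have h : pdy (fun q => f (Tmap q)) = fun q => -pdy f (Tmap q) := funext (pdy_Tcomp f)
  rw [h, pdx_neg, pdx_Tcomp, neg_neg]

/-- **Main Proposition 3, part (1).** If `(s₁,s₂)` is a pair of
triangular s-functions with parameters `(α,β,γ)`, then `(s₁∘T, s₂∘T)` is a pair of
triangular s-functions with parameters `(β,α,γ)`. -/
theorem statement16 (α β γ : ℂ) (D : Set (ℂ × ℂ)) (hD : IsOpen D)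
    (hDgood : ∀ p ∈ D, p.1 ≠ 0 ∧ p.1 ≠ 1 ∧ p.2 ≠ 0 ∧ p.2 ≠ 1 ∧ p.1 ≠ p.2)
    (s₁ s₂ : ℂ × ℂ → ℂ)
    (hs₁ : DifferentiableOn ℂ s₁ D) (hs₂ : DifferentiableOn ℂ s₂ D)
    (hJ : ∀ p ∈ D, Jac s₁ s₂ p ≠ 0)
    (h₁ : ∀ p ∈ D, brX s₁ s₂ p = F1 γ p)
    (h₂ : ∀ p ∈ D, brY s₁ s₂ p = F2 γ p)
    (h₃ : ∀ p ∈ D, sqX s₁ s₂ p = P1 α β γ p)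
    (h₄ : ∀ p ∈ D, sqY s₁ s₂ p = P2 α β γ p) :
    ∀ p : ℂ × ℂ, p.1 ≠ 0 → p.1 ≠ 1 → p.2 ≠ 0 → p.2 ≠ 1 → p.1 ≠ p.2 →
      Tmap p ∈ D →
      brX (fun q => s₁ (Tmap q)) (fun q => s₂ (Tmap q)) p = F1 γ p ∧
      brY (fun q => s₁ (Tmap q)) (fun q => s₂ (Tmap q)) p = F2 γ p ∧
      sqX (fun q => s₁ (Tmap q)) (fun q => s₂ (Tmap q)) p = P1 β α γ p ∧
      sqY (fun q => s₁ (Tmap q)) (fun q => s₂ (Tmap q)) p = P2 β α γ p := by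

  intro p h0 h1 h2 h3 h12 hT
  set q := Tmap p with hq
  have hq1 : q.1 = 1 - p.1 := rfl
  have hq2 : q.2 = 1 - p.2 := rfl
  have n1 : (1:ℂ) - p.1 ≠ 0 := sub_ne_zero.mpr (Ne.symm h1)
  have n2 : (1:ℂ) - p.2 ≠ 0 := sub_ne_zero.mpr (Ne.symm h3)
  have n3 : p.2 - p.1 ≠ 0 := sub_ne_zero.mpr (Ne.symm h12)
  have n4 : p.1 - p.2 ≠ 0 := sub_ne_zero.mpr h12
  have n5 : p.1 - 1 ≠ 0 := sub_ne_zero.mpr h1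
  have n6 : p.2 - 1 ≠ 0 := sub_ne_zero.mpr h3
  have e1 := pdx_Tcomp s₁ p
  have e2 := pdx_Tcomp s₂ p
  have e3 := pdy_Tcomp s₁ p
  have e4 := pdy_Tcomp s₂ p
  have e5 := pdxx_Tcomp s₁ p
  have e6 := pdxx_Tcomp s₂ p
  have e7 := pdyy_Tcomp s₁ p
  have e8 := pdyy_Tcomp s₂ p
  have e9 := pdxy_Tcomp s₁ p
  have e10 := pdxy_Tcomp s₂ p
  refine ⟨?_, ?_, ?_, ?_⟩
  · have key : brX (fun q => s₁ (Tmap q)) (fun q => s₂ (Tmap q)) p = -brX s₁ s₂ q := by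
      simp only [brX, Jac, e1, e2, e3, e4, e5, e6, ← hq]
      ring
    rw [key, h₁ q hT]
    simp only [F1, hq1, hq2]
    field_simp [h0, h2, n1, n2, n3, n4, n5, n6]
    ring
  · have key : brY (fun q => s₁ (Tmap q)) (fun q => s₂ (Tmap q)) p = -brY s₁ s₂ q := by
      simp only [brY, Jac, e1, e2, e3, e4, e7, e8, ← hq]
      ring
    rw [key, h₂ q hT]
    simp only [F2, hq1, hq2]
    field_simp [h0, h2, n1, n2, n3, n4, n5, n6]
    ring
  · have key : sqX (fun q => s₁ (Tmap q)) (fun q => s₂ (Tmap q)) p = -sqX s₁ s₂ q := by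
      simp only [sqX, Jac, e1, e2, e3, e4, e5, e6, e9, e10, ← hq]
      ring
    rw [key, h₃ q hT]
    simp only [P1, hq1, hq2]
    field_simp [h0, h2, n1, n2, n3, n4, n5, n6]
    ring
  · have key : sqY (fun q => s₁ (Tmap q)) (fun q => s₂ (Tmap q)) p = -sqY s₁ s₂ q := by
      simp only [sqY, Jac, e1, e2, e3, e4, e7, e8, e9, e10, ← hq]
      ring
    rw [key, h₄ q hT]
    simp only [P2, hq1, hq2]
    field_simp [h0, h2, n1, n2, n3, n4, n5, n6]
    ring
end
end

section
/- (Invariance of the J-invariants of Picard curves.) For λ₁,λ₂ ∈ ℂ with λ₁,λ₂ ∉ {0,1} and λ₁ ≠ λ₂, define J₁(λ₁,λ₂) := λ₂²(λ₂−1)²/(λ₁²(λ₁−1)²(λ₁−λ₂)²) and J₂(λ₁,λ₂) := λ₁²(λ₁−1)²/(λ₂²(λ₂−1)²(λ₂−λ₁)²). Let T(λ₁,λ₂) := (1−λ₁, 1−λ₂), S₁(λ₁,λ₂) := (λ₁/λ₂, 1/λ₂), and S₂(λ₁,λ₂) := (1/λ₁, λ₂/λ₁). Then J₁(λ₁,λ₂)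 = J₁(T(λ₁,λ₂)) = J₁(S₁(λ₁,λ₂)) = J₁(S₁T(λ₁,λ₂)) = J₁(TS₁(λ₁,λ₂)) = J₁(S₁TS₁(λ₁,λ₂)), where S₁T(λ₁,λ₂) = ((1−λ₁)/(1−λ₂), 1/(1−λ₂)), TS₁(λ₁,λ₂) = ((λ₂−λ₁)/λ₂, (λ₂−1)/λ₂), S₁TS₁(λ₁,λ₂) = ((λ₂−λ₁)/(λ₂−1), λ₂/(λ₂−1)); and J₂(λ₁,λ₂) = J₂(T(λ₁,λ₂)) = J₂(S₂(λ₁,λ₂)) = J₂(S₂T(λ₁,λ₂)) = J₂(TS₂(λ₁,λ₂)) = J₂(S₂TS₂(λ₁,λ₂)), where S₂T(λ₁,λ₂) = (1/(1−λ₁), (1−λ₂)/(1−λ₁)), TS₂(λ₁,λ₂) = ((λ₁−1)/λ₁, (λ₁−λ₂)/λ₁), S₂TS₂(λ₁,λ₂) = (λ₁/(λ₁−1), (λ₁−λ₂)/(λ₁−1)). -/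
/-!
With `λ₁ = a / c` and `λ₂ = b / c`, `J₁` is the squared ratio of `b (b - c) c`, the product of
the pairwise differences of `0, c, b`, to `a (a - c) (a - b)`, the product of the differences of
`a` with these points. Each listed map sends `λ₁` and the third point `r` of `{0, 1, λ₂}` to
`(λ₁ - p) / (q - p)` and `(r - p) / (q - p)`, where `p, q` are the other two points. In the
coordinates `a = λ₁ - p`, `b = r - p`, `c = q - p` both products are, up to sign, those of the
original configuration translated by `-p`, and squaring removes the signs. `J₂` is `J₁` with its
arguments swapped.
-/

noncomputable section

/-- The first J-invariant of the Picard curve `y³ = x(x−1)(x−λ₁)(x−λ₂)`. -/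
def J1 (l₁ l₂ : ℂ) : ℂ :=
  l₂ ^ 2 * (l₂ - 1) ^ 2 / (l₁ ^ 2 * (l₁ - 1) ^ 2 * (l₁ - l₂) ^ 2)

/-- The second J-invariant of the Picard curve `y³ = x(x−1)(x−λ₁)(x−λ₂)`. -/
def J2 (l₁ l₂ : ℂ) : ℂ :=
  l₁ ^ 2 * (l₁ - 1) ^ 2 / (l₂ ^ 2 * (l₂ - 1) ^ 2 * (l₂ - l₁) ^ 2)

lemma J2_eq_J1_swap (a b : ℂ) : J2 a b = J1 b a := rfl

lemma J1_eq_sq_div_sq (a b : ℂ) :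
    J1 a b = (b * (b - 1)) ^ 2 / (a * (a - 1) * (a - b)) ^ 2 := by
  rw [J1]
  ring

lemma J1_div_div (a b c : ℂ) (hc : c ≠ 0) :
    J1 (a / c) (b / c) = (b * (b - c) * c) ^ 2 / (a * (a - c) * (a - b)) ^ 2 := by
  rw [J1_eq_sq_div_sq, div_sub_one hc, div_sub_one hc, div_sub_div_same]
  field_simp

theorem J1_invariant (l₁ l₂ : ℂ) (h₂0 : l₂ ≠ 0) (h₂1 : l₂ ≠ 1) :
    J1 l₁ l₂ = J1 (1 - l₁) (1 - l₂) ∧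
    J1 l₁ l₂ = J1 (l₁ / l₂) (1 / l₂) ∧
    J1 l₁ l₂ = J1 ((1 - l₁) / (1 - l₂)) (1 / (1 - l₂)) ∧
    J1 l₁ l₂ = J1 ((l₂ - l₁) / l₂) ((l₂ - 1) / l₂) ∧
    J1 l₁ l₂ = J1 ((l₂ - l₁) / (l₂ - 1)) (l₂ / (l₂ - 1)) := by
  have h1₂ : 1 - l₂ ≠ 0 := sub_ne_zero.2 h₂1.symm
  have h₂1' : l₂ - 1 ≠ 0 := sub_ne_zero.2 h₂1
  rw [J1_eq_sq_div_sq l₁ l₂]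
  refine ⟨?_, ?_, ?_, ?_, ?_⟩
  · rw [J1_eq_sq_div_sq]; congr 1 <;> ring
  · rw [J1_div_div _ _ _ h₂0]; congr 1 <;> ring
  · rw [J1_div_div _ _ _ h1₂]; congr 1 <;> ring
  · rw [J1_div_div _ _ _ h₂0]; congr 1 <;> ring
  · rw [J1_div_div _ _ _ h₂1']; congr 1 <;> ring

theorem statement19_general (l₁ l₂ : ℂ)
    (h₁0 : l₁ ≠ 0) (h₁1 : l₁ ≠ 1) (h₂0 : l₂ ≠ 0) (h₂1 : l₂ ≠ 1) :
    (J1 l₁ l₂ = J1 (1 - l₁) (1 - l₂) ∧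
     J1 l₁ l₂ = J1 (l₁ / l₂) (1 / l₂) ∧
     J1 l₁ l₂ = J1 ((1 - l₁) / (1 - l₂)) (1 / (1 - l₂)) ∧
     J1 l₁ l₂ = J1 ((l₂ - l₁) / l₂) ((l₂ - 1) / l₂) ∧
     J1 l₁ l₂ = J1 ((l₂ - l₁) / (l₂ - 1)) (l₂ / (l₂ - 1))) ∧
    (J2 l₁ l₂ = J2 (1 - l₁) (1 - l₂) ∧
     J2 l₁ l₂ = J2 (1 / l₁) (l₂ / l₁) ∧
     J2 l₁ l₂ = J2 (1 / (1 - l₁)) ((1 - l₂) / (1 - l₁)) ∧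
     J2 l₁ l₂ = J2 ((l₁ - 1) / l₁) ((l₁ - l₂) / l₁) ∧
     J2 l₁ l₂ = J2 (l₁ / (l₁ - 1)) ((l₁ - l₂) / (l₁ - 1))) := by
  simp only [J2_eq_J1_swap]
  exact ⟨J1_invariant l₁ l₂ h₂0 h₂1, J1_invariant l₂ l₁ h₁0 h₁1⟩

/-- Invariance of the J-invariants `J₁`, `J₂` of Picard curves under
the transformations `T`, `S₁`, `S₂` and their listed composites. -/
theorem statement19 (l₁ l₂ : ℂ)
    (h₁0 : l₁ ≠ 0) (h₁1 : l₁ ≠ 1) (h₂0 : l₂ ≠ 0) (h₂1 : l₂ ≠ 1) (h : l₁ ≠ l₂) :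
    (J1 l₁ l₂ = J1 (1 - l₁) (1 - l₂) ∧
     J1 l₁ l₂ = J1 (l₁ / l₂) (1 / l₂) ∧
     J1 l₁ l₂ = J1 ((1 - l₁) / (1 - l₂)) (1 / (1 - l₂)) ∧
     J1 l₁ l₂ = J1 ((l₂ - l₁) / l₂) ((l₂ - 1) / l₂) ∧
     J1 l₁ l₂ = J1 ((l₂ - l₁) / (l₂ - 1)) (l₂ / (l₂ - 1))) ∧
    (J2 l₁ l₂ = J2 (1 - l₁) (1 - l₂) ∧
     J2 l₁ l₂ = J2 (1 / l₁) (l₂ / l₁) ∧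
     J2 l₁ l₂ = J2 (1 / (1 - l₁)) ((1 - l₂) / (1 - l₁)) ∧
     J2 l₁ l₂ = J2 ((l₁ - 1) / l₁) ((l₁ - l₂) / l₁) ∧
     J2 l₁ l₂ = J2 (l₁ / (l₁ - 1)) ((l₁ - l₂) / (l₁ - 1))) :=
  statement19_general l₁ l₂ h₁0 h₁1 h₂0 h₂1
end
end
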